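/- arXiv:1711.02695 — 2 statements merged into one kernel-verified Lean document; each statement's English description precedes it below -/
import Mathlib

section
/- Let f : [0,1]^(ℕ*) → ℝ be monotone, homogeneous, and independent (as for finite index sets, where independence holds for any partition of ℕ* into two sets). Suppose f is recursive: for all s, s' ∈ [0,1]^(ℕ*), f(s'_1, s'_2, …) · f(0, s_1, s_2, …) = f(s_1, s_2, …) · f(0, s'_1, s'_2, …), where (0, s_1, s_2, …) denotes the shifted sequence. Suppose f satisfies the long-run property: for all s and all ε > 0, there exists a sequence z ∈ [0,1]^(ℕ*) with z_k → 0 such that f(s·z) ≥ f(s) − ε (where s·z is the coordinatewise product). Then there exist δ ∈ [0,1) and λ ≥ 0 such that f(s) = λ · ∑_{k=1}^∞ δ^{k−1} s_k for all s. -/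
open Finset Filter

/-- `s` lies in the domain `[0,1]^ℕ` (coordinates indexed from 0, standing for ℕ*). -/
def InDom (s : ℕ → ℝ) : Prop := ∀ k, 0 ≤ s k ∧ s k ≤ 1

/-- combine coordinates: those in `J` from `u`, the rest from `v`. -/
def combine (J : Set ℕ) [DecidablePred (· ∈ J)] (u v : ℕ → ℝ) : ℕ → ℝ :=
  fun k => if k ∈ J then u k else v k

/-- the shifted sequence `(0, s₁, s₂, …)`. -/
def shift (s : ℕ → ℝ) : ℕ → ℝ := fun k => if k = 0 then 0 else s (k - 1)

def Monotone' (f : (ℕ → ℝ) → ℝ) : Prop :=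
  ∀ s s' : ℕ → ℝ, InDom s → InDom s' → (∀ k, s k ≤ s' k) → f s ≤ f s'

def Homogeneous' (f : (ℕ → ℝ) → ℝ) : Prop :=
  ∀ (c : ℝ) (s : ℕ → ℝ), 0 ≤ c → InDom s → InDom (fun k => c * s k) →
    f (fun k => c * s k) = c * f s

def Independent' (f : (ℕ → ℝ) → ℝ) : Prop :=
  ∀ (J : Set ℕ) (_ : DecidablePred (· ∈ J)) (u u' v v' : ℕ → ℝ),
    InDom u → InDom u' → InDom v → InDom v' →
    f (combine J u v) - f (combine J u v') = f (combine J u' v) - f (combine J u' v')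

def Recursive' (f : (ℕ → ℝ) → ℝ) : Prop :=
  ∀ s s' : ℕ → ℝ, InDom s → InDom s' →
    f s' * f (shift s) = f s * f (shift s')

def LongRun (f : (ℕ → ℝ) → ℝ) : Prop :=
  ∀ s : ℕ → ℝ, InDom s → ∀ ε : ℝ, 0 < ε →
    ∃ z : ℕ → ℝ, InDom z ∧ Tendsto z atTop (nhds 0) ∧
      f (fun k => s k * z k) ≥ f s - ε


/-! Independence and homogeneity make `f` additive over a splitting of the coordinates and linear
on finitely many of them, with weights `f eₖ` (`eₖ = Pi.single k 1`). Recursiveness tested against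
`e₀` says that shifting multiplies `f` by `δ = f e₁ / f e₀`, so
`f s = ∑_{k<n} f e₀ δ^k s_k + δ^n f (s_{·+n})`. At `s = 1` the partial sums stay below `f 1`,
forcing `δ < 1`, and then the remainder vanishes as `n → ∞`. If `f e₀ = 0`, every `f eₖ` vanishes,
so `f` only sees the tail of a sequence; the long-run property then forces `f 1 = 0`, whence
`f = 0` by monotonicity. -/

section

variable {f : (ℕ → ℝ) → ℝ}

lemma inDom_zero : InDom 0 := fun _ => by simp

lemma inDom_one : InDom 1 := fun _ => by simp

lemma inDom_single (n : ℕ) : InDom (Pi.single n 1) := fun k => by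
  rcases eq_or_ne k n with rfl | h <;> simp [*]

lemma InDom.indicator {s : ℕ → ℝ} (hs : InDom s) (S : Set ℕ) : InDom (S.indicator s) := fun k => by
  by_cases hk : k ∈ S <;> simp [hk, hs k]

lemma InDom.comp_add {s : ℕ → ℝ} (hs : InDom s) (n : ℕ) : InDom fun k => s (k + n) :=
  fun k => hs (k + n)

lemma shift_single (n : ℕ) : shift (Pi.single n (1 : ℝ)) = Pi.single (n + 1) 1 := by
  funext k
  cases k <;> simp [shift, Pi.single_apply]

lemma Homogeneous'.map_zero (hhom : Homogeneous' f) : f 0 = 0 := by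
  simpa [← Pi.zero_def] using hhom 0 0 le_rfl inDom_zero (by simpa [← Pi.zero_def] using inDom_zero)

lemma Monotone'.nonneg (hmono : Monotone' f) (hhom : Homogeneous' f) {s : ℕ → ℝ} (hs : InDom s) :
    0 ≤ f s :=
  hhom.map_zero ▸ hmono 0 s inDom_zero hs fun k => (hs k).1

lemma Monotone'.le_map_one (hmono : Monotone' f) {s : ℕ → ℝ} (hs : InDom s) : f s ≤ f 1 :=
  hmono s 1 hs inDom_one fun k => (hs k).2

lemma Independent'.map_eq_add_compl (hind : Independent' f) (hhom : Homogeneous' f) (S : Set ℕ)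
    {s : ℕ → ℝ} (hs : InDom s) : f s = f (S.indicator s) + f (Sᶜ.indicator s) := by
  classical
  have h := hind S inferInstance s 0 s 0 hs inDom_zero hs inDom_zero
  have hss : combine S s s = s := funext fun k => ite_self _
  have hs0 : combine S s 0 = S.indicator s := funext fun k => by simp [combine, Set.indicator_apply]
  have h0s : combine S 0 s = Sᶜ.indicator s := funext fun k => by
    by_cases hk : k ∈ S <;> simp [combine, hk]
  have h00 : combine S 0 0 = 0 := funext fun k => ite_self _
  rw [hss, hs0, h0s, h00, hhom.map_zero] at h
  linarith

lemma Homogeneous'.map_indicator_singleton (hhom : Homogeneous' f) (n : ℕ) {s : ℕ → ℝ}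
    (hs : InDom s) : f (({n} : Set ℕ).indicator s) = f (Pi.single n 1) * s n := by
  have h : ({n} : Set ℕ).indicator s = fun k => s n * (Pi.single n 1 : ℕ → ℝ) k := by
    funext k
    rcases eq_or_ne k n with rfl | hk <;> simp [*]
  rw [h, hhom _ _ (hs n).1 (inDom_single n) (h ▸ hs.indicator _), mul_comm]

lemma map_indicator_Iio (hhom : Homogeneous' f) (hind : Independent' f) (n : ℕ) {s : ℕ → ℝ}
    (hs : InDom s) :
    f ((Set.Iio n).indicator s) = ∑ k ∈ range n, f (Pi.single k 1) * s k := by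
  induction n with
  | zero => simpa [← Pi.zero_def] using hhom.map_zero
  | succ n ih =>
    have hhead :
        (Set.Iio n).indicator ((Set.Iio (n + 1)).indicator s) = (Set.Iio n).indicator s := by
      rw [Set.indicator_indicator, Set.inter_eq_left.2 (Set.Iio_subset_Iio n.le_succ)]
    have hlast :
        (Set.Iio n)ᶜ.indicator ((Set.Iio (n + 1)).indicator s) = ({n} : Set ℕ).indicator s := by
      rw [Set.indicator_indicator]
      congr 1
      ext k
      simp only [Set.mem_inter_iff, Set.mem_compl_iff, Set.mem_Iio, Set.mem_singleton_iff]
      omega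
    rw [hind.map_eq_add_compl hhom (Set.Iio n) (hs.indicator _), hhead, hlast, ih,
      hhom.map_indicator_singleton n hs, sum_range_succ]

lemma map_eq_sum_add_indicator_Ici (hhom : Homogeneous' f) (hind : Independent' f) (n : ℕ)
    {s : ℕ → ℝ} (hs : InDom s) :
    f s = ∑ k ∈ range n, f (Pi.single k 1) * s k + f ((Set.Ici n).indicator s) := by
  rw [← map_indicator_Iio hhom hind n hs, ← Set.compl_Iio]
  exact hind.map_eq_add_compl hhom _ hs

lemma map_indicator_Ici {δ : ℝ} (hshift : ∀ s, InDom s → f (shift s) = δ * f s) (n : ℕ)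
    {s : ℕ → ℝ} (hs : InDom s) :
    f ((Set.Ici n).indicator s) = δ ^ n * f (fun k => s (k + n)) := by
  induction n generalizing s with
  | zero => simp
  | succ n ih =>
    have h : (Set.Ici (n + 1)).indicator s = shift ((Set.Ici n).indicator fun k => s (k + 1)) := by
      funext k
      cases k <;> simp [shift, Set.indicator_apply]
    rw [h, hshift _ ((hs.comp_add 1).indicator _), ih (hs.comp_add 1), pow_succ]
    simp only [add_assoc]
    ring

lemma Recursive'.map_single_eq_zero (hrec : Recursive' f) (h0 : f (Pi.single 0 1) = 0) (k : ℕ) :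
    f (Pi.single k 1) = 0 := by
  induction k with
  | zero => exact h0
  | succ k ih =>
    have h := hrec (Pi.single k 1) (Pi.single (k + 1) 1) (inDom_single k) (inDom_single (k + 1))
    rw [shift_single, shift_single, ih, zero_mul] at h
    exact mul_self_eq_zero.1 h

lemma LongRun.map_one_eq_zero (hlr : LongRun f) (hmono : Monotone' f) (hhom : Homogeneous' f)
    (hind : Independent' f) (hsingle : ∀ k, f (Pi.single k 1) = 0) : f 1 = 0 := by
  suffices h : f 1 ≤ f 1 / 2 by linarith [hmono.nonneg hhom inDom_one]
  refine le_of_forall_pos_le_add fun ε hε => ?_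
  obtain ⟨z, hz, hz0, hge⟩ := hlr 1 inDom_one ε hε
  obtain ⟨N, hN⟩ :=
    eventually_atTop.1 (hz0.eventually (gt_mem_nhds (by norm_num : (0 : ℝ) < 1 / 2)))
  have hhalf : InDom fun _ => (1 / 2 : ℝ) := fun _ => by norm_num
  have htail : f ((Set.Ici N).indicator z) ≤ f (fun _ => 1 / 2) :=
    hmono _ _ (hz.indicator _) hhalf fun k => by
      by_cases hk : N ≤ k
      · simpa [hk] using (hN k hk).le
      · simp [hk]
  have hhalf_eq : f (fun _ => 1 / 2) = 1 / 2 * f 1 := by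
    simpa using hhom (1 / 2) 1 (by norm_num) inDom_one (by simpa using hhalf)
  have hz_eq := map_eq_sum_add_indicator_Ici hhom hind N hz
  simp only [hsingle, zero_mul, sum_const_zero, zero_add] at hz_eq
  simp only [Pi.one_apply, one_mul] at hge
  linarith

lemma Recursive'.map_shift (hrec : Recursive' f) (h0 : f (Pi.single 0 1) ≠ 0) {s : ℕ → ℝ}
    (hs : InDom s) : f (shift s) = f (Pi.single 1 1) / f (Pi.single 0 1) * f s := by
  have h := hrec s (Pi.single 0 1) hs (inDom_single 0)
  rw [shift_single] at h
  field_simp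
  linarith

lemma map_single_eq_mul_pow {δ : ℝ} (hshift : ∀ s, InDom s → f (shift s) = δ * f s) (k : ℕ) :
    f (Pi.single k 1) = f (Pi.single 0 1) * δ ^ k := by
  induction k with
  | zero => simp
  | succ k ih => rw [← shift_single, hshift _ (inDom_single k), ih, pow_succ]; ring

lemma map_eq_sum_add_pow_mul (hhom : Homogeneous' f) (hind : Independent' f) {δ : ℝ}
    (hshift : ∀ s, InDom s → f (shift s) = δ * f s) (n : ℕ) {s : ℕ → ℝ} (hs : InDom s) :
    f s = ∑ k ∈ range n, f (Pi.single 0 1) * δ ^ k * s k + δ ^ n * f (fun k => s (k + n)) := by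
  rw [map_eq_sum_add_indicator_Ici hhom hind n hs, map_indicator_Ici hshift n hs]
  congr 1
  exact sum_congr rfl fun k _ => by rw [map_single_eq_mul_pow hshift k]

lemma lt_one_of_forall_sum_range_mul_pow_le {a δ M : ℝ} (ha : 0 < a)
    (h : ∀ n, ∑ k ∈ range n, a * δ ^ k ≤ M) : δ < 1 := by
  by_contra! hδ
  obtain ⟨n, hn⟩ := exists_nat_gt (M / a)
  have hlin : n * a ≤ ∑ k ∈ range n, a * δ ^ k :=
    calc (n : ℝ) * a = ∑ _k ∈ range n, a := by simp
      _ ≤ _ := sum_le_sum fun k _ => le_mul_of_one_le_right ha.le (one_le_pow₀ hδ)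
  rw [div_lt_iff₀ ha] at hn
  linarith [h n]

lemma tendsto_sum_range_of_eq_add_pow_mul {g b : ℕ → ℝ} {x δ M : ℝ} (hδ0 : 0 ≤ δ) (hδ1 : δ < 1)
    (hb : ∀ n, |b n| ≤ M) (h : ∀ n, x = ∑ k ∈ range n, g k + δ ^ n * b n) :
    Tendsto (fun n => ∑ k ∈ range n, g k) atTop (nhds x) := by
  have herr : Tendsto (fun n => δ ^ n * b n) atTop (nhds 0) := by
    refine squeeze_zero_norm (fun n => ?_)
      (by simpa using (tendsto_pow_atTop_nhds_zero_of_lt_one hδ0 hδ1).mul_const M)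
    rw [norm_mul, norm_pow, Real.norm_of_nonneg hδ0, Real.norm_eq_abs]
    exact mul_le_mul_of_nonneg_left (hb n) (pow_nonneg hδ0 n)
  have hsum : (fun n => ∑ k ∈ range n, g k) = fun n => x - δ ^ n * b n :=
    funext fun n => eq_sub_of_add_eq (h n).symm
  simpa [hsum] using (tendsto_const_nhds (x := x)).sub herr

lemma map_eq_mul_tsum (hmono : Monotone' f) (hhom : Homogeneous' f) (hind : Independent' f)
    {δ : ℝ} (hδ0 : 0 ≤ δ) (hδ1 : δ < 1) (hshift : ∀ s, InDom s → f (shift s) = δ * f s)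
    {s : ℕ → ℝ} (hs : InDom s) : f s = f (Pi.single 0 1) * ∑' k, δ ^ k * s k := by
  have hsummable : Summable fun k => δ ^ k * s k :=
    (summable_geometric_of_lt_one hδ0 hδ1).of_nonneg_of_le
      (fun k => mul_nonneg (pow_nonneg hδ0 k) (hs k).1)
      (fun k => mul_le_of_le_one_right (pow_nonneg hδ0 k) (hs k).2)
  have hpartial := tendsto_sum_range_of_eq_add_pow_mul hδ0 hδ1
    (fun n => (abs_of_nonneg (hmono.nonneg hhom (hs.comp_add n))).trans_le
      (hmono.le_map_one (hs.comp_add n)))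
    (fun n => map_eq_sum_add_pow_mul hhom hind hshift n hs)
  rw [← tsum_mul_left]
  refine tendsto_nhds_unique hpartial ?_
  simpa only [mul_assoc] using (hsummable.mul_left (f (Pi.single 0 1))).hasSum.tendsto_sum_nat

end

/-- a monotone, homogeneous, independent, recursive aggregation
function on `[0,1]^ℕ` satisfying the long-run property is a discounted sum. -/
theorem stmt1 (f : (ℕ → ℝ) → ℝ)
    (hmono : Monotone' f) (hhom : Homogeneous' f) (hind : Independent' f)
    (hrec : Recursive' f) (hlr : LongRun f) :
    ∃ δ lam : ℝ, 0 ≤ δ ∧ δ < 1 ∧ 0 ≤ lam ∧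
      ∀ s : ℕ → ℝ, InDom s → f s = lam * ∑' k : ℕ, δ ^ k * s k := by
  by_cases h0 : f (Pi.single 0 1) = 0
  · have hone := hlr.map_one_eq_zero hmono hhom hind (hrec.map_single_eq_zero h0)
    refine ⟨0, 0, le_rfl, zero_lt_one, le_rfl, fun s hs => ?_⟩
    rw [zero_mul]
    exact le_antisymm (hone ▸ hmono.le_map_one hs) (hmono.nonneg hhom hs)
  set δ := f (Pi.single 1 1) / f (Pi.single 0 1)
  have hshift : ∀ s, InDom s → f (shift s) = δ * f s := fun s hs => hrec.map_shift h0 hs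
  have hpos : 0 < f (Pi.single 0 1) := (hmono.nonneg hhom (inDom_single 0)).lt_of_ne' h0
  have hδ0 : 0 ≤ δ := div_nonneg (hmono.nonneg hhom (inDom_single 1)) hpos.le
  have hδ1 : δ < 1 := lt_one_of_forall_sum_range_mul_pow_le (M := f 1) hpos fun n => by
    have h := map_eq_sum_add_pow_mul hhom hind hshift n inDom_one
    have htail := hmono.nonneg hhom (inDom_one.comp_add n)
    simp only [Pi.one_apply, mul_one] at h htail
    nlinarith [pow_nonneg hδ0 n]
  exact ⟨δ, _, hδ0, hδ1, hpos.le, fun s hs => map_eq_mul_tsum hmono hhom hind hδ0 hδ1 hshift hs⟩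
end

section
/- Let f : [0,1]^(ℕ*) → ℝ be monotone, homogeneous, and independent, and satisfy the long-run property. Then for every s ∈ [0,1]^(ℕ*), f(s) − f(s_1^k) converges to 0 as k → ∞, where s_1^k denotes the sequence agreeing with s on coordinates 1,…,k and equal to 0 elsewhere. Consequently f(s) = ∑_{l=1}^∞ [f(s_1^l) − f(s_1^{l−1})]. -/
open Finset Filter

/-- `trunc s k` agrees with `s` on the first `k` coordinates and is `0` afterwards
(this is `s₁ᵏ` in the paper's notation). -/
def trunc (s : ℕ → ℝ) (k : ℕ) : ℕ → ℝ := fun l => if l < k then s l else 0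

/-- for a monotone, homogeneous, independent aggregation function
with the long-run property, `f s - f (s₁ᵏ)` converges to `0`, and consequently
`f s` is the sum of the series of increments `f (s₁ˡ) - f (s₁^{l-1})`. -/
theorem stmt2 (f : (ℕ → ℝ) → ℝ)
    (hmono : Monotone' f) (hhom : Homogeneous' f) (hind : Independent' f)
    (hlr : LongRun f) :
    ∀ s : ℕ → ℝ, InDom s →
      Tendsto (fun k => f s - f (trunc s k)) atTop (nhds 0) ∧
      HasSum (fun l : ℕ => f (trunc s (l + 1)) - f (trunc s l)) (f s) := by
  intro s hs
  have hz0 : InDom (fun _ : ℕ => (0:ℝ)) := fun k => ⟨le_rfl, zero_le_one⟩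
  have h10 : InDom (fun _ : ℕ => (1:ℝ)) := fun k => ⟨zero_le_one, le_rfl⟩
  have hf0 : f (fun _ => (0:ℝ)) = 0 := by
    have h := hhom 0 (fun _ => 0) le_rfl hz0 (by intro k; norm_num)
    simpa using h
  have htr : ∀ k, InDom (trunc s k) := by
    intro k l
    dsimp [trunc]
    split
    · exact hs l
    · exact ⟨le_rfl, zero_le_one⟩
  have htrle : ∀ k l, trunc s k l ≤ s l := by
    intro k l
    by_cases h : l < k <;> simp [trunc, h]
    exact (hs l).1
  have htrmono : ∀ k k', k ≤ k' → ∀ l, trunc s k l ≤ trunc s k' l := by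
    intro k k' hkk' l
    by_cases h : l < k
    · have h' : l < k' := lt_of_lt_of_le h hkk'
      simp [trunc, h, h']
    · simp [trunc, h]
      by_cases h' : l < k' <;> simp [h']
      exact (hs l).1
  have hfle : ∀ k, f (trunc s k) ≤ f s := fun k => hmono _ _ (htr k) hs (htrle k)
  have hfmono : ∀ k k', k ≤ k' → f (trunc s k) ≤ f (trunc s k') :=
    fun k k' h => hmono _ _ (htr k) (htr k') (htrmono k k' h)
  -- key estimate
  have key : ∀ ε : ℝ, 0 < ε → ∃ K : ℕ, f s - f (trunc s K) ≤ 2 * ε := by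
    intro ε hε
    set M := f (fun _ => (1:ℝ)) with hM
    have hM0 : 0 ≤ M := by
      have := hmono (fun _ => 0) (fun _ => 1) hz0 h10 (fun k => zero_le_one)
      rw [hf0] at this; exact this
    set δ : ℝ := min 1 (ε / (M + 1)) with hδ
    have hδpos : 0 < δ := lt_min one_pos (div_pos hε (by linarith))
    have hδ1 : δ ≤ 1 := min_le_left _ _
    have hδM : δ * M ≤ ε := by
      have h1 : δ ≤ ε / (M + 1) := min_le_right _ _
      have h2 : δ * M ≤ (ε / (M + 1)) * M :=
        mul_le_mul_of_nonneg_right h1 hM0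
      have h3 : (ε / (M + 1)) * M ≤ ε := by
        rw [div_mul_eq_mul_div, div_le_iff₀ (by linarith : (0:ℝ) < M + 1)]
        nlinarith
      linarith
    obtain ⟨z, hzdom, hztend, hzf⟩ := hlr s hs ε hε
    have hev : ∀ᶠ k in atTop, z k < δ := hztend.eventually_lt_const hδpos
    obtain ⟨K, hK⟩ := eventually_atTop.1 hev
    refine ⟨K, ?_⟩
    classical
    set J : Set ℕ := {k | k < K} with hJ
    haveI : DecidablePred (· ∈ J) := fun k => Nat.decLt k K
    have hδdom : InDom (fun _ : ℕ => δ) := fun k => ⟨le_of_lt hδpos, hδ1⟩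
    -- s·z is dominated by u1 := combine J s δ
    have hszdom : InDom (fun k => s k * z k) := by
      intro k
      constructor
      · exact mul_nonneg (hs k).1 (hzdom k).1
      · exact mul_le_one₀ (hs k).2 (hzdom k).1 (hzdom k).2
    have hu1dom : InDom (combine J s (fun _ => δ)) := by
      intro k
      by_cases h : k ∈ J <;> simp [combine, h]
      exacts [⟨(hs k).1, (hs k).2⟩, ⟨le_of_lt hδpos, hδ1⟩]
    have hle : ∀ k, s k * z k ≤ combine J s (fun _ => δ) k := by
      intro k
      by_cases h : k ∈ J <;> simp [combine, h]
      · calc s k * z k ≤ s k * 1 :=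
              mul_le_mul_of_nonneg_left (hzdom k).2 (hs k).1
          _ = s k := mul_one _
      · have hkK : ¬ k < K := h
        have : z k ≤ δ := le_of_lt (hK k (le_of_not_gt hkK))
        calc s k * z k ≤ 1 * δ :=
              mul_le_mul (hs k).2 this (hzdom k).1 zero_le_one
          _ = δ := one_mul _
    have h1 : f (fun k => s k * z k) ≤ f (combine J s (fun _ => δ)) :=
      hmono _ _ hszdom hu1dom hle
    -- independence
    have hindep := hind J inferInstance s (fun _ => 0) (fun _ => δ) (fun _ => 0)
      hs hz0 hδdom hz0
    have hc1 : combine J s (fun _ => 0) = trunc s K := by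
      funext k
      by_cases h : k < K <;>
        simp [combine, trunc, hJ, Set.mem_setOf_eq, h]
    have hc2 : combine J (fun _ => 0) (fun _ => 0) = (fun _ => (0:ℝ)) := by
      funext k; by_cases h : k ∈ J <;> simp [combine, h]
    -- the tail part
    have hc3 : combine J (fun _ => 0) (fun _ => δ)
        = (fun k => δ * (if k < K then 0 else 1)) := by
      funext k
      by_cases h : k < K <;>
        simp [combine, hJ, Set.mem_setOf_eq, h]
    have hwdom : InDom (fun k => if k < K then (0:ℝ) else 1) := by
      intro k; by_cases h : k < K <;> simp [h]
    have hwδdom : InDom (fun k => δ * (if k < K then (0:ℝ) else 1)) := by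
      intro k
      dsimp only
      split
      · simp
      · simp only [mul_one]; exact ⟨le_of_lt hδpos, hδ1⟩
    have hhomw := hhom δ (fun k => if k < K then (0:ℝ) else 1)
      (le_of_lt hδpos) hwdom hwδdom
    have hwleM : f (fun k => if k < K then (0:ℝ) else 1) ≤ M := by
      apply hmono _ _ hwdom h10
      intro k; by_cases h : k < K <;> simp [h]
    have htail : f (combine J (fun _ => 0) (fun _ => δ)) ≤ ε := by
      rw [hc3, hhomw]
      calc δ * f (fun k => if k < K then (0:ℝ) else 1) ≤ δ * M :=
            mul_le_mul_of_nonneg_left hwleM (le_of_lt hδpos)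
        _ ≤ ε := hδM
    rw [hc1, hc2, hf0] at hindep
    -- hindep : f (combine J s δ) - f (trunc s K) = f (combine J 0 δ) - 0
    have h2 : f (combine J s (fun _ => δ)) ≤ f (trunc s K) + ε := by linarith
    have h3 : f s - ε ≤ f (fun k => s k * z k) := hzf
    linarith
  have hnonneg : ∀ k, 0 ≤ f s - f (trunc s k) := fun k => sub_nonneg.2 (hfle k)
  have htend : Tendsto (fun k => f s - f (trunc s k)) atTop (nhds 0) := by
    rw [Metric.tendsto_atTop]
    intro ε hε
    obtain ⟨K, hK⟩ := key (ε / 3) (by linarith)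
    refine ⟨K, fun n hn => ?_⟩
    have h1 : f (trunc s K) ≤ f (trunc s n) := hfmono K n hn
    have h2 : f s - f (trunc s n) ≤ 2 * (ε / 3) := by linarith
    rw [Real.dist_eq, sub_zero, abs_of_nonneg (hnonneg n)]
    linarith
  refine ⟨htend, ?_⟩
  have htrunc0 : trunc s 0 = (fun _ => (0:ℝ)) := by
    funext l; simp [trunc]
  have hterm_nonneg : ∀ l : ℕ, 0 ≤ f (trunc s (l + 1)) - f (trunc s l) :=
    fun l => sub_nonneg.2 (hfmono l (l + 1) (Nat.le_succ l))
  rw [hasSum_iff_tendsto_nat_of_nonneg hterm_nonneg]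
  have hsum : ∀ n : ℕ, ∑ l ∈ Finset.range n,
      (f (trunc s (l + 1)) - f (trunc s l)) = f (trunc s n) := by
    intro n
    rw [Finset.sum_range_sub (fun l => f (trunc s l)) n, htrunc0, hf0, sub_zero]
  simp only [hsum]
  have : Tendsto (fun n => f s - (f s - f (trunc s n))) atTop (nhds (f s - 0)) :=
    tendsto_const_nhds.sub htend
  simpa using this
end
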